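/- For every even k ≥ 2, every real number c with 1 ≤ c ≤ (2ℓ_k-1)², and every ω ∈ C₊,k: f₀(ω)·(2ℓ_k-1)² ≥ 10·( r_k·(2ℓ_k-1) + (2ℓ_k-1)⁻¹·log c )·(2ℓ_k-1). The same holds for every odd k ≥ 3 and every ω ∈ C₋,k. -/

import Mathlib

/-- The three-letter alphabet `Σ = {-1, 0, +1}`. -/
inductive Letter : Type
  | neg : Letter
  | zero : Letter
  | pos : Letter
deriving DecidableEq

instance : Fintype Letter where
  elems := {Letter.neg, Letter.zero, Letter.pos}
  complete := by intro x; cases x <;> simp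

/-- `f₀(ω)`: the frequency of the symbol `0` in the finite string `ω`. -/
noncomputable def f0 {n : ℕ} (ω : Fin n → Letter) : ℝ :=
  ((Finset.univ.filter fun i => ω i = Letter.zero).card : ℝ) / n

/-- The binary entropy `H(t) = -t log t - (1-t) log (1-t)` (with `0 log 0 = 0`). -/
noncomputable def H (t : ℝ) : ℝ := -(t * Real.log t) - (1 - t) * Real.log (1 - t)

/-- `η` occurs as a consecutive substring of `ω` starting at position `s`. -/
def occursAt {p n : ℕ} (η : Fin p → Letter) (ω : Fin n → Letter) (s : ℕ) : Prop :=
  ∃ _h : s + p ≤ n, ∀ i : Fin p, η i = ω ⟨s + i.val, by have := i.isLt; omega⟩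

/-- `η` occurs as a consecutive substring of `ω`. -/
def occursIn {p n : ℕ} (η : Fin p → Letter) (ω : Fin n → Letter) : Prop :=
  ∃ s, occursAt η ω s

/-- The symbol forbidden at level `k`: `-1` for odd `k`, `+1` for even `k`. -/
def bad (k : ℕ) : Letter := if k % 2 = 1 then Letter.neg else Letter.pos

/-- The forbidden sets `F_k` of the construction of Section 4: strings of length `2ℓ_k - 1`
containing the bad symbol, or over the good alphabet with frequency of zeros `≥ r_k`,
or over the good alphabet containing a forbidden string of an earlier level of the same parity. -/
def Forb (ℓ : ℕ → ℕ) (r : ℕ → ℚ) (k : ℕ) : Set (Fin (2 * ℓ k - 1) → Letter) :=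
  {ω | ∃ i, ω i = bad k} ∪
    {ω | (∀ i, ω i ≠ bad k) ∧ (r k : ℝ) ≤ f0 ω} ∪
    {ω | (∀ i, ω i ≠ bad k) ∧
      ∃ k' : Fin k, 1 ≤ k'.val ∧ k'.val % 2 = k % 2 ∧
        ∃ η ∈ Forb ℓ r k'.val, occursIn η ω}
termination_by k
decreasing_by exact k'.isLt

open Classical in
/-- The locally admissible strings of length `2n-1`:  no string from `⋃_{k' ≡ parity, k' ≥ 1} F_{k'}`
occurs as a consecutive substring.  `parity = 1` corresponds to `X₊`, `parity = 0` to `X₋`. -/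
noncomputable def Padm (ℓ : ℕ → ℕ) (r : ℕ → ℚ) (parity : ℕ) (n : ℕ) :
    Finset (Fin (2 * n - 1) → Letter) :=
  Finset.univ.filter fun ω =>
    ∀ k, 1 ≤ k → k % 2 = parity → ∀ η ∈ Forb ℓ r k, ¬ occursIn η ω

/-- `m_k = (2ℓ_k - 1)/(2ℓ_{k-1} - 1)`. -/
def mblk (ℓ : ℕ → ℕ) (k : ℕ) : ℕ := (2 * ℓ k - 1) / (2 * ℓ (k - 1) - 1)

open Classical in
/-- Strings of length `N` which are concatenations of `m` blocks of length `L`,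
the blocks at the even positions (`0`-based) taken from `B` and the blocks at odd
positions equal to the constant block `g^L`. -/
noncomputable def CfromB {L : ℕ} (N m : ℕ) (g : Letter) (B : Finset (Fin L → Letter)) :
    Finset (Fin N → Letter) :=
  Finset.univ.filter fun ω => ∀ j < m,
    if j % 2 = 0 then ∃ η ∈ B, occursAt η ω (j * L)
    else occursAt (fun _ : Fin L => g) ω (j * L)

/-- `B₊,k = P_{X₊,ℓ_k} ∖ {(+1)^{2ℓ_k-1}}`. -/
noncomputable def Bplus (ℓ : ℕ → ℕ) (r : ℕ → ℚ) (k : ℕ) :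
    Finset (Fin (2 * ℓ k - 1) → Letter) :=
  Padm ℓ r 1 (ℓ k) \ {fun _ => Letter.pos}

/-- `B₋,k = P_{X₋,ℓ_k} ∖ {(-1)^{2ℓ_k-1}}`. -/
noncomputable def Bminus (ℓ : ℕ → ℕ) (r : ℕ → ℚ) (k : ℕ) :
    Finset (Fin (2 * ℓ k - 1) → Letter) :=
  Padm ℓ r 0 (ℓ k) \ {fun _ => Letter.neg}

/-- `C₊,k`: alternating concatenations of blocks from `B₊,k-1` and constant `+1` blocks. -/
noncomputable def Cplus (ℓ : ℕ → ℕ) (r : ℕ → ℚ) (k : ℕ) :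
    Finset (Fin (2 * ℓ k - 1) → Letter) :=
  CfromB (2 * ℓ k - 1) (mblk ℓ k) Letter.pos (Bplus ℓ r (k - 1))

/-- `C₋,k`: alternating concatenations of blocks from `B₋,k-1` and constant `-1` blocks. -/
noncomputable def Cminus (ℓ : ℕ → ℕ) (r : ℕ → ℚ) (k : ℕ) :
    Finset (Fin (2 * ℓ k - 1) → Letter) :=
  CfromB (2 * ℓ k - 1) (mblk ℓ k) Letter.neg (Bminus ℓ r (k - 1))

/-- The subshift `X_k ⊆ Σ^ℤ`: bi-infinite sequences in which no string of `F_k` occurs. -/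
def Xk (ℓ : ℕ → ℕ) (r : ℕ → ℚ) (k : ℕ) : Set (ℤ → Letter) :=
  {x | ∀ η ∈ Forb ℓ r k, ∀ j : ℤ, ¬ (∀ i : Fin (2 * ℓ k - 1), η i = x (j + (i.val : ℤ)))}

/-- `X₊ = ⋂_{m ≥ 1} X_{2m-1}`. -/
def Xplus (ℓ : ℕ → ℕ) (r : ℕ → ℚ) : Set (ℤ → Letter) :=
  {x | ∀ m, 1 ≤ m → x ∈ Xk ℓ r (2 * m - 1)}

/-- `X₋ = ⋂_{m ≥ 1} X_{2m}`. -/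
def Xminus (ℓ : ℕ → ℕ) (r : ℕ → ℚ) : Set (ℤ → Letter) :=
  {x | ∀ m, 1 ≤ m → x ∈ Xk ℓ r (2 * m)}


/-! Each block of `C₊,k` (resp. `C₋,k`) taken from `B₊,k-1` (resp. `B₋,k-1`) avoids the symbol
forbidden by `F₁` (resp. `F₂`) and is not constant, so it contains a `0`. Every other block, of
length `L = 2ℓ_{k-1} - 1`, is of this kind, hence `f₀ ≥ 1 / (2L)`. Since `log c ≤ 2 log N` for
`N = 2ℓ_k - 1`, condition (S3) at level `k - 1` bounds the left-hand side by `N² / (2L)`. -/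

theorem Letter.eq_zero_of_ne_neg_of_ne_pos {x : Letter} (hneg : x ≠ .neg) (hpos : x ≠ .pos) :
    x = .zero := by
  cases x <;> simp_all

theorem mem_Forb_of_eq_bad (ℓ : ℕ → ℕ) (r : ℕ → ℚ) {b : ℕ} {η : Fin (2 * ℓ b - 1) → Letter}
    {i : Fin (2 * ℓ b - 1)} (hi : η i = bad b) : η ∈ Forb ℓ r b := by
  rw [Forb]
  exact Or.inl (Or.inl ⟨i, hi⟩)

theorem ne_bad_of_mem_Padm {ℓ : ℕ → ℕ} {r : ℕ → ℚ} {p b n : ℕ} (hb : 1 ≤ b) (hbp : b % 2 = p)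
    (hℓb : 0 < ℓ b) (hbn : ℓ b ≤ n) {ω : Fin (2 * n - 1) → Letter} (hω : ω ∈ Padm ℓ r p n)
    (i : Fin (2 * n - 1)) : ω i ≠ bad b := by
  intro hi
  set M := 2 * ℓ b - 1
  -- the window of length `M` that contains position `i` and fits into `ω`
  set s := min i.val (2 * n - 1 - M)
  have hsM : s + M ≤ 2 * n - 1 := by omega
  have his : i.val - s < M := by omega
  let η : Fin M → Letter := fun t => ω ⟨s + t.val, by omega⟩
  have hη : η ∈ Forb ℓ r b := by
    refine mem_Forb_of_eq_bad ℓ r (i := ⟨i.val - s, his⟩) ?_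
    simpa [η, show s + (i.val - s) = i.val by omega] using hi
  simp only [Padm, Finset.mem_filter] at hω
  exact hω.2 b hb hbp η hη ⟨s, hsM, fun _ => rfl⟩

theorem exists_eq_zero_of_mem_Bplus {ℓ : ℕ → ℕ} {r : ℕ → ℚ} {j : ℕ} (hℓ1 : 0 < ℓ 1)
    (hℓj : ℓ 1 ≤ ℓ j) {η : Fin (2 * ℓ j - 1) → Letter} (hη : η ∈ Bplus ℓ r j) :
    ∃ i, η i = .zero := by
  rw [Bplus, Finset.mem_sdiff, Finset.mem_singleton] at hη
  obtain ⟨i, hi⟩ := Function.ne_iff.1 hη.2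
  exact ⟨i, Letter.eq_zero_of_ne_neg_of_ne_pos (ne_bad_of_mem_Padm le_rfl rfl hℓ1 hℓj hη.1 i) hi⟩

theorem exists_eq_zero_of_mem_Bminus {ℓ : ℕ → ℕ} {r : ℕ → ℚ} {j : ℕ} (hℓ2 : 0 < ℓ 2)
    (hℓj : ℓ 2 ≤ ℓ j) {η : Fin (2 * ℓ j - 1) → Letter} (hη : η ∈ Bminus ℓ r j) :
    ∃ i, η i = .zero := by
  rw [Bminus, Finset.mem_sdiff, Finset.mem_singleton] at hη
  obtain ⟨i, hi⟩ := Function.ne_iff.1 hη.2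
  exact ⟨i, Letter.eq_zero_of_ne_neg_of_ne_pos hi
    (ne_bad_of_mem_Padm one_le_two rfl hℓ2 hℓj hη.1 i)⟩

section CfromB

variable {L N m : ℕ} {g : Letter} {B : Finset (Fin L → Letter)}

theorem half_le_card_zero_of_mem_CfromB (hB : ∀ η ∈ B, ∃ i, η i = .zero)
    {ω : Fin N → Letter} (hω : ω ∈ CfromB N m g B) :
    (m + 1) / 2 ≤ (Finset.univ.filter fun i => ω i = .zero).card := by
  classical
  -- the zero inside block `2t` lies at a position whose quotient by `2L` is `t`
  have hsub : Finset.range ((m + 1) / 2) ⊆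
      (Finset.univ.filter fun i => ω i = .zero).image fun i => i.val / (2 * L) := by
    intro t ht
    have hblock := (Finset.mem_filter.1 hω).2 (2 * t) (by simp at ht; omega)
    rw [if_pos (by omega)] at hblock
    obtain ⟨η, hηB, hfit, hocc⟩ := hblock
    obtain ⟨i, hi⟩ := hB η hηB
    have hiL := i.isLt
    refine Finset.mem_image.2 ⟨⟨2 * t * L + i, by omega⟩, by simp [← hocc i, hi], ?_⟩
    show (2 * t * L + i.val) / (2 * L) = t
    rw [show 2 * t * L + i.val = i.val + 2 * L * t by ring, Nat.add_mul_div_left _ _ (by omega),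
      Nat.div_eq_of_lt (by omega), zero_add]
  calc (m + 1) / 2 = (Finset.range ((m + 1) / 2)).card := (Finset.card_range _).symm
    _ ≤ _ := Finset.card_le_card hsub
    _ ≤ _ := Finset.card_image_le

theorem inv_two_mul_le_f0_of_mem_CfromB (hm : 0 < m) (hN : N = m * L)
    (hB : ∀ η ∈ B, ∃ i, η i = .zero) {ω : Fin N → Letter} (hω : ω ∈ CfromB N m g B) :
    (2 * (L : ℝ))⁻¹ ≤ f0 ω := by
  classical
  subst hN
  obtain ⟨η, hηB, -⟩ : ∃ η ∈ B, occursAt η ω 0 := by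
    simpa using (Finset.mem_filter.1 hω).2 0 hm
  have hL : 0 < L := (hB η hηB).choose.pos
  have hcard : (m : ℝ) ≤ 2 * (Finset.univ.filter fun i => ω i = .zero).card := by
    have := half_le_card_zero_of_mem_CfromB hB hω
    exact_mod_cast (by omega : m ≤ 2 * (Finset.univ.filter fun i => ω i = .zero).card)
  rw [f0, le_div_iff₀ (by positivity)]
  push_cast
  field_simp
  linarith

end CfromB

theorem ten_mul_add_log_mul_le {N r f c : ℝ} (hN : 0 < N)
    (hS : 10 * (r + 2 * N⁻¹ ^ 2 * Real.log N) ≤ f) (hc1 : 1 ≤ c) (hc2 : c ≤ N ^ 2) :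
    10 * (r * N + N⁻¹ * Real.log c) * N ≤ f * N ^ 2 := by
  have hlogc : Real.log c ≤ 2 * Real.log N := by
    simpa [Real.log_pow] using Real.log_le_log (by linarith) hc2
  calc 10 * (r * N + N⁻¹ * Real.log c) * N = 10 * r * N ^ 2 + 10 * Real.log c := by
        field_simp
    _ ≤ 10 * (r + 2 * N⁻¹ ^ 2 * Real.log N) * N ^ 2 := by
        field_simp
        linarith
    _ ≤ f * N ^ 2 := by gcongr

theorem frequency_bound_of_mem_CfromB {L N : ℕ} (hL : 0 < L) (hLN : L ≤ N) (hdvd : L ∣ N)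
    {r c : ℝ} (hS3 : 10 * (r + 2 * (N : ℝ)⁻¹ ^ 2 * Real.log N) ≤ (2 * (L : ℝ))⁻¹)
    (hc1 : 1 ≤ c) (hc2 : c ≤ (N : ℝ) ^ 2) {g : Letter} {B : Finset (Fin L → Letter)}
    (hB : ∀ η ∈ B, ∃ i, η i = .zero) {ω : Fin N → Letter} (hω : ω ∈ CfromB N (N / L) g B) :
    10 * (r * N + (N : ℝ)⁻¹ * Real.log c) * N ≤ f0 ω * (N : ℝ) ^ 2 :=
  have hf0 := inv_two_mul_le_f0_of_mem_CfromB (Nat.div_pos hLN hL)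
    (Nat.div_mul_cancel hdvd).symm hB hω
  ten_mul_add_log_mul_le (by exact_mod_cast hL.trans_le hLN) (hS3.trans hf0) hc1 hc2

theorem frequency_bound_of_mem_CfromB_succ {ℓ : ℕ → ℕ} {r : ℝ} {j : ℕ} (hℓj : 0 < ℓ j)
    (hmono : ℓ j < ℓ (j + 1)) (hdvd : (2 * ℓ j - 1) ∣ (2 * ℓ (j + 1) - 1))
    (hS3 : 10 * (r + 2 * (((2 * ℓ (j + 1) - 1 : ℕ) : ℝ))⁻¹ ^ 2 *
        Real.log ((2 * ℓ (j + 1) - 1 : ℕ) : ℝ)) ≤ ((4 * ℓ j - 2 : ℕ) : ℝ)⁻¹)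
    {c : ℝ} (hc1 : 1 ≤ c) (hc2 : c ≤ ((2 * ℓ (j + 1) - 1 : ℕ) : ℝ) ^ 2)
    {g : Letter} {B : Finset (Fin (2 * ℓ j - 1) → Letter)} (hB : ∀ η ∈ B, ∃ i, η i = .zero)
    {ω : Fin (2 * ℓ (j + 1) - 1) → Letter} (hω : ω ∈ CfromB _ (mblk ℓ (j + 1)) g B) :
    10 * (r * ((2 * ℓ (j + 1) - 1 : ℕ) : ℝ) +
        (((2 * ℓ (j + 1) - 1 : ℕ) : ℝ))⁻¹ * Real.log c) * ((2 * ℓ (j + 1) - 1 : ℕ) : ℝ) ≤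
      f0 ω * ((2 * ℓ (j + 1) - 1 : ℕ) : ℝ) ^ 2 := by
  rw [show 4 * ℓ j - 2 = 2 * (2 * ℓ j - 1) by omega, Nat.cast_mul, Nat.cast_two] at hS3
  exact frequency_bound_of_mem_CfromB (by omega) (by omega) hdvd hS3 hc1 hc2 hB hω

theorem C_frequency_inequality_general (ℓ : ℕ → ℕ) (r : ℕ → ℚ)
    (hl1 : ℓ 1 = 4) (hlmono : ∀ k, 1 ≤ k → ℓ k < ℓ (k + 1))
    (hdvd : ∀ k, 2 ≤ k → (2 * ℓ (k - 1) - 1) ∣ (2 * ℓ k - 1))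
    (hS3 : ∀ k, 1 ≤ k →
      10 * ((r (k + 1) : ℝ) + 2 * (((2 * ℓ (k + 1) - 1 : ℕ) : ℝ))⁻¹ ^ 2 *
        Real.log ((2 * ℓ (k + 1) - 1 : ℕ) : ℝ)) ≤ ((4 * ℓ k - 2 : ℕ) : ℝ)⁻¹) :
    (∀ k, 2 ≤ k → k % 2 = 0 → ∀ c : ℝ, 1 ≤ c → c ≤ ((2 * ℓ k - 1 : ℕ) : ℝ) ^ 2 →
      ∀ ω ∈ Cplus ℓ r k,
        10 * ((r k : ℝ) * ((2 * ℓ k - 1 : ℕ) : ℝ) +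
            (((2 * ℓ k - 1 : ℕ) : ℝ))⁻¹ * Real.log c) * ((2 * ℓ k - 1 : ℕ) : ℝ) ≤
          f0 ω * ((2 * ℓ k - 1 : ℕ) : ℝ) ^ 2) ∧
    (∀ k, 3 ≤ k → k % 2 = 1 → ∀ c : ℝ, 1 ≤ c → c ≤ ((2 * ℓ k - 1 : ℕ) : ℝ) ^ 2 →
      ∀ ω ∈ Cminus ℓ r k,
        10 * ((r k : ℝ) * ((2 * ℓ k - 1 : ℕ) : ℝ) +
            (((2 * ℓ k - 1 : ℕ) : ℝ))⁻¹ * Real.log c) * ((2 * ℓ k - 1 : ℕ) : ℝ) ≤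
          f0 ω * ((2 * ℓ k - 1 : ℕ) : ℝ) ^ 2) := by
  have hℓle : ∀ a b, 1 ≤ a → a ≤ b → ℓ a ≤ ℓ b :=
    Nat.rel_of_forall_rel_succ_of_le_of_le (· ≤ ·) fun n hn => (hlmono n hn).le
  have hℓpos : ∀ j, 1 ≤ j → 0 < ℓ j := fun j hj => by have := hℓle 1 j le_rfl hj; omega
  constructor
  · intro k hk _ c hc1 hc2 ω hω
    obtain ⟨j, rfl⟩ : ∃ j, k = j + 1 := ⟨k - 1, by omega⟩
    have hj : 1 ≤ j := by omega
    exact frequency_bound_of_mem_CfromB_succ (hℓpos j hj) (hlmono j hj) (hdvd _ hk) (hS3 j hj)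
      hc1 hc2 (fun _ hη => exists_eq_zero_of_mem_Bplus (hℓpos 1 le_rfl) (hℓle 1 j le_rfl hj) hη) hω
  · intro k hk _ c hc1 hc2 ω hω
    obtain ⟨j, rfl⟩ : ∃ j, k = j + 1 := ⟨k - 1, by omega⟩
    have hj : 2 ≤ j := by omega
    exact frequency_bound_of_mem_CfromB_succ (hℓpos j (by omega)) (hlmono j (by omega))
      (hdvd _ (by omega)) (hS3 j (by omega)) hc1 hc2
      (fun _ hη => exists_eq_zero_of_mem_Bminus (hℓpos 2 one_le_two) (hℓle 2 j one_le_two hj) hη) hω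

theorem C_frequency_inequality (ℓ : ℕ → ℕ) (r : ℕ → ℚ)
    (hl1 : ℓ 1 = 4) (hlmono : ∀ k, 1 ≤ k → ℓ k < ℓ (k + 1))
    (hr1 : r 1 = 1 / 2) (hrpos : ∀ k, 1 ≤ k → 0 < r k) (hrhalf : ∀ k, 1 ≤ k → r k ≤ 1 / 2)
    (hdvd : ∀ k, 2 ≤ k → (2 * ℓ (k - 1) - 1) ∣ (2 * ℓ k - 1))
    (hS1 : ∀ k, 1 ≤ k → 1 < ((2 * ℓ k - 1 : ℕ) : ℝ) * (r k : ℝ))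
    (hS2 : ∀ k, 1 ≤ k → 10 * H ((r (k + 1) : ℝ)) ≤ 1 / 2 * (r k : ℝ) * Real.log 2)
    (hS3 : ∀ k, 1 ≤ k →
      10 * ((r (k + 1) : ℝ) + 2 * (((2 * ℓ (k + 1) - 1 : ℕ) : ℝ))⁻¹ ^ 2 *
        Real.log ((2 * ℓ (k + 1) - 1 : ℕ) : ℝ)) ≤ ((4 * ℓ k - 2 : ℕ) : ℝ)⁻¹)
    (hS4 : ∀ k, 1 ≤ k → 2 ^ (4 * ℓ k) ≤ ℓ (k + 1)) :
    (∀ k, 2 ≤ k → k % 2 = 0 → ∀ c : ℝ, 1 ≤ c → c ≤ ((2 * ℓ k - 1 : ℕ) : ℝ) ^ 2 →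
      ∀ ω ∈ Cplus ℓ r k,
        10 * ((r k : ℝ) * ((2 * ℓ k - 1 : ℕ) : ℝ) +
            (((2 * ℓ k - 1 : ℕ) : ℝ))⁻¹ * Real.log c) * ((2 * ℓ k - 1 : ℕ) : ℝ) ≤
          f0 ω * ((2 * ℓ k - 1 : ℕ) : ℝ) ^ 2) ∧
    (∀ k, 3 ≤ k → k % 2 = 1 → ∀ c : ℝ, 1 ≤ c → c ≤ ((2 * ℓ k - 1 : ℕ) : ℝ) ^ 2 →
      ∀ ω ∈ Cminus ℓ r k,
        10 * ((r k : ℝ) * ((2 * ℓ k - 1 : ℕ) : ℝ) +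
            (((2 * ℓ k - 1 : ℕ) : ℝ))⁻¹ * Real.log c) * ((2 * ℓ k - 1 : ℕ) : ℝ) ≤
          f0 ω * ((2 * ℓ k - 1 : ℕ) : ℝ) ^ 2) :=
  C_frequency_inequality_general ℓ r hl1 hlmono hdvd hS3
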